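/- arXiv:1402.1108 — 2 statements merged into one kernel-verified Lean document; each statement's English description precedes it below -/
import Mathlib

section
/- (Holomorphic extension and vanishing of the 1-jet differential at a transversal point at infinity; local version of Theorem 7.1.) Let d ≥ 4 be an integer and let R and R₂ be polynomials in two complex variables satisfying R₂(x, y) = y^d · R(x/y, 1/y) for all (x, y) ∈ ℂ² with y ≠ 0. Let f : 𝔻 → ℂ², ζ ↦ (x₂(ζ), y₂(ζ)), be a holomorphic map with R₂(x₂(ζ), y₂(ζ)) = 0 for all ζ ∈ 𝔻, and let ζ₀ ∈ 𝔻 satisfy y₂(ζ₀) = 0 and (∂R₂/∂x)(x₂(ζ₀), 0) ≠ 0. Then the function g(ζ) := − y₂'(ζ) · y₂(ζ)^{d−3} / (∂R₂/∂x)(x₂(ζ), y₂(ζ)) is holomorphic on a neighborhood of ζ₀, satisfies g(ζ₀) = 0, and for every ζ near ζ₀ with y₂(ζ) ≠ 0 it coincides with the 1-jet differential y₀'(ζ) / (∂R/∂x)(x₀(ζ), y₀(ζ)), where x₀ = x₂/y₂ and y₀ = 1/y₂. -/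
/-! Differentiating `R₂(x, y) = y^d R(x/y, 1/y)` in `x` gives
`∂R₂/∂x (x, y) = y^(d-1) ∂R/∂x (x/y, 1/y)`, and `y₀' = -y₂'/y₂²`. Hence, wherever `y₂ ≠ 0`,
`y₀' / ∂R/∂x (x₀, y₀) = -y₂' y₂^(d-3) / ∂R₂/∂x (x₂, y₂)`. The right-hand side is holomorphic
wherever `∂R₂/∂x (x₂, y₂) ≠ 0`, an open set containing `ζ₀` by transversality, and it vanishes at
`ζ₀` because `d - 3 > 0`. -/

open MvPolynomial

section

variable {𝕜 : Type*} [NontriviallyNormedField 𝕜]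

theorem MvPolynomial.hasDerivAt_eval_update {σ : Type*} [DecidableEq σ] (Q : MvPolynomial σ 𝕜)
    (x : σ → 𝕜) (i : σ) :
    HasDerivAt (fun t => eval (Function.update x i t) Q) (eval x (pderiv i Q)) (x i) := by
  induction Q using MvPolynomial.induction_on with
  | C a => simpa using hasDerivAt_const (x i) a
  | add p q hp hq => simpa only [map_add] using hp.fun_add hq
  | mul_X p j hp =>
    by_cases hji : j = i
    · subst hji
      simpa [pderiv_X_self, add_comm, mul_comm] using hp.fun_mul (hasDerivAt_id' (x j))
    · simpa [Function.update_of_ne hji, pderiv_X_of_ne hji] using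
        (hp.mul_const (x j)).congr_deriv (mul_comm _ _)

theorem MvPolynomial.hasDerivAt_eval_fst (Q : MvPolynomial (Fin 2) 𝕜) (x y : 𝕜) :
    HasDerivAt (fun t => eval ![t, y] Q) (eval ![x, y] (pderiv 0 Q)) x := by
  have hupdate : ∀ t, Function.update ![x, y] 0 t = ![t, y] := fun t => by
    ext i; fin_cases i <;> rfl
  simpa only [hupdate, Matrix.cons_val_zero] using hasDerivAt_eval_update Q ![x, y] 0

theorem MvPolynomial.eval_pderiv_fst_of_eval_eq_pow_mul (R R₂ : MvPolynomial (Fin 2) 𝕜) (d : ℕ)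
    (y : 𝕜) (hrel : ∀ x, eval ![x, y] R₂ = y ^ d * eval ![x / y, 1 / y] R) (x : 𝕜) :
    eval ![x, y] (pderiv 0 R₂) = y ^ d * eval ![x / y, 1 / y] (pderiv 0 R) / y := by
  have hR : HasDerivAt (fun t => y ^ d * eval ![t / y, 1 / y] R)
      (y ^ d * (eval ![x / y, 1 / y] (pderiv 0 R) * (1 / y))) x :=
    ((hasDerivAt_eval_fst R (x / y) (1 / y)).comp x ((hasDerivAt_id x).div_const y)).const_mul _
  rw [(hasDerivAt_eval_fst R₂ x y).unique (hR.congr_of_eventuallyEq (.of_forall hrel))]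
  ring

theorem AnalyticOnNhd.mvPolynomial_eval_vecCons {s : Set 𝕜} {u v : 𝕜 → 𝕜}
    (hu : AnalyticOnNhd 𝕜 u s) (hv : AnalyticOnNhd 𝕜 v s) (Q : MvPolynomial (Fin 2) 𝕜) :
    AnalyticOnNhd 𝕜 (fun z => eval ![u z, v z] Q) s :=
  AnalyticOnNhd.aeval_mvPolynomial (f := fun z => ![u z, v z]) (Fin.forall_fin_two.2 ⟨hu, hv⟩) Q

end

theorem one_jet_differential_extends_and_vanishes_at_infinity_general (d : ℕ) (hd : 4 ≤ d)
    (R R₂ : MvPolynomial (Fin 2) ℂ)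
    (hrel : ∀ x y : ℂ, y ≠ 0 →
      MvPolynomial.eval ![x, y] R₂ = y ^ d * MvPolynomial.eval ![x / y, 1 / y] R)
    (x₂ y₂ : ℂ → ℂ)
    (hx : DifferentiableOn ℂ x₂ (Metric.ball (0 : ℂ) 1))
    (hy : DifferentiableOn ℂ y₂ (Metric.ball (0 : ℂ) 1))
    (ζ₀ : ℂ) (hζ₀ : ζ₀ ∈ Metric.ball (0 : ℂ) 1) (hy0 : y₂ ζ₀ = 0)
    (hR2x : MvPolynomial.eval ![x₂ ζ₀, 0] (MvPolynomial.pderiv (0 : Fin 2) R₂) ≠ 0) :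
    ∃ V : Set ℂ, IsOpen V ∧ ζ₀ ∈ V ∧ V ⊆ Metric.ball (0 : ℂ) 1 ∧
      DifferentiableOn ℂ
        (fun ζ => - (deriv y₂ ζ * (y₂ ζ) ^ (d - 3) /
          MvPolynomial.eval ![x₂ ζ, y₂ ζ] (MvPolynomial.pderiv (0 : Fin 2) R₂))) V ∧
      - (deriv y₂ ζ₀ * (y₂ ζ₀) ^ (d - 3) /
          MvPolynomial.eval ![x₂ ζ₀, y₂ ζ₀] (MvPolynomial.pderiv (0 : Fin 2) R₂)) = 0 ∧
      ∀ ζ ∈ V, y₂ ζ ≠ 0 →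
        - (deriv y₂ ζ * (y₂ ζ) ^ (d - 3) /
            MvPolynomial.eval ![x₂ ζ, y₂ ζ] (MvPolynomial.pderiv (0 : Fin 2) R₂)) =
          deriv (fun w => 1 / y₂ w) ζ /
            MvPolynomial.eval ![x₂ ζ / y₂ ζ, 1 / y₂ ζ]
              (MvPolynomial.pderiv (0 : Fin 2) R) := by
  set disk := Metric.ball (0 : ℂ) 1
  set D := fun ζ => eval ![x₂ ζ, y₂ ζ] (pderiv 0 R₂)
  have hxa : AnalyticOnNhd ℂ x₂ disk := hx.analyticOnNhd Metric.isOpen_ball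
  have hya : AnalyticOnNhd ℂ y₂ disk := hy.analyticOnNhd Metric.isOpen_ball
  have hDa : AnalyticOnNhd ℂ D disk := hxa.mvPolynomial_eval_vecCons hya _
  set V := disk ∩ D ⁻¹' {0}ᶜ
  have hVdisk : V ⊆ disk := Set.inter_subset_left
  have hVopen : IsOpen V :=
    hDa.continuousOn.isOpen_inter_preimage Metric.isOpen_ball isOpen_compl_singleton
  refine ⟨V, hVopen, ⟨hζ₀, by simpa [D, hy0] using hR2x⟩, hVdisk, ?_, ?_, ?_⟩
  · exact (((hya.deriv.mul (hya.pow _)).mono hVdisk).div (hDa.mono hVdisk)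
      fun ζ hζ => hζ.2).neg.differentiableOn
  · rw [hy0, zero_pow (by omega), mul_zero, zero_div, neg_zero]
  · rintro ζ ⟨hζ, -⟩ hyζ
    have hyd : DifferentiableAt ℂ y₂ ζ := (hya ζ hζ).differentiableAt
    simp_rw [one_div, deriv_fun_inv'' hyd hyζ,
      eval_pderiv_fst_of_eval_eq_pow_mul R R₂ d (y₂ ζ) (fun x => hrel x _ hyζ)]
    obtain ⟨k, rfl⟩ : ∃ k, d = k + 3 := ⟨d - 3, by omega⟩
    rw [Nat.add_sub_cancel]
    field_simp
    ring

/-- holomorphic extension and vanishing of the 1-jet differential at a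
transversal point at infinity (local version of Théorème 7.1). With
`R₂(x, y) = y^d·R(x/y, 1/y)` for `y ≠ 0`, `d ≥ 4`, a holomorphic disc
`ζ ↦ (x₂ ζ, y₂ ζ)` lying in `{R₂ = 0}`, and `ζ₀` with `y₂ ζ₀ = 0` and
`(∂R₂/∂x)(x₂ ζ₀, 0) ≠ 0`, the function
`g(ζ) = − y₂'(ζ)·y₂(ζ)^{d−3} / (∂R₂/∂x)(x₂ ζ, y₂ ζ)` is holomorphic on a neighborhood of
`ζ₀`, vanishes at `ζ₀`, and coincides with `y₀'/(∂R/∂x)(x₀, y₀)` (where `x₀ = x₂/y₂`,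
`y₀ = 1/y₂`) at the nearby points where `y₂ ≠ 0`. -/
theorem one_jet_differential_extends_and_vanishes_at_infinity (d : ℕ) (hd : 4 ≤ d)
    (R R₂ : MvPolynomial (Fin 2) ℂ)
    (hrel : ∀ x y : ℂ, y ≠ 0 →
      MvPolynomial.eval ![x, y] R₂ = y ^ d * MvPolynomial.eval ![x / y, 1 / y] R)
    (x₂ y₂ : ℂ → ℂ)
    (hx : DifferentiableOn ℂ x₂ (Metric.ball (0 : ℂ) 1))
    (hy : DifferentiableOn ℂ y₂ (Metric.ball (0 : ℂ) 1))
    (hcurve : ∀ ζ ∈ Metric.ball (0 : ℂ) 1, MvPolynomial.eval ![x₂ ζ, y₂ ζ] R₂ = 0)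
    (ζ₀ : ℂ) (hζ₀ : ζ₀ ∈ Metric.ball (0 : ℂ) 1) (hy0 : y₂ ζ₀ = 0)
    (hR2x : MvPolynomial.eval ![x₂ ζ₀, 0] (MvPolynomial.pderiv (0 : Fin 2) R₂) ≠ 0) :
    ∃ V : Set ℂ, IsOpen V ∧ ζ₀ ∈ V ∧ V ⊆ Metric.ball (0 : ℂ) 1 ∧
      DifferentiableOn ℂ
        (fun ζ => - (deriv y₂ ζ * (y₂ ζ) ^ (d - 3) /
          MvPolynomial.eval ![x₂ ζ, y₂ ζ] (MvPolynomial.pderiv (0 : Fin 2) R₂))) V ∧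
      - (deriv y₂ ζ₀ * (y₂ ζ₀) ^ (d - 3) /
          MvPolynomial.eval ![x₂ ζ₀, y₂ ζ₀] (MvPolynomial.pderiv (0 : Fin 2) R₂)) = 0 ∧
      ∀ ζ ∈ V, y₂ ζ ≠ 0 →
        - (deriv y₂ ζ * (y₂ ζ) ^ (d - 3) /
            MvPolynomial.eval ![x₂ ζ, y₂ ζ] (MvPolynomial.pderiv (0 : Fin 2) R₂)) =
          deriv (fun w => 1 / y₂ w) ζ /
            MvPolynomial.eval ![x₂ ζ / y₂ ζ, 1 / y₂ ζ]
              (MvPolynomial.pderiv (0 : Fin 2) R) :=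
  one_jet_differential_extends_and_vanishes_at_infinity_general d hd R R₂ hrel x₂ y₂ hx hy ζ₀ hζ₀
    hy0 hR2x
end

section
/- (Asymptotics of a weighted partition sum.) Fix an integer κ ≥ 1 and let H_κ = 1 + 1/2 + ⋯ + 1/κ denote the κ-th harmonic number. For each positive integer m define S(m) = Σ (m₁ + m₂ + ⋯ + m_κ), the sum being over all tuples (m₁, …, m_κ) ∈ ℕ^κ satisfying m₁ + 2m₂ + ⋯ + κ·m_κ = m. Then there exists a constant C > 0 such that for all integers m ≥ 1, | S(m) − H_κ · m^κ / (κ! · κ!) | ≤ C · m^{κ−1}. -/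
/-
Splitting off the multiplicity `k` of the largest part gives the recursions
`P_{κ+1}(n) = ∑_k P_κ(n - (κ+1)k)` and `S_{κ+1}(n) = ∑_k (S_κ + k P_κ)(n - (κ+1)k)`
for the number `P_κ` of solutions and the sum `S_κ`. By telescoping `x ↦ x^(a+1)`,
summing `m^a` over the progression `m = n, n - j, n - 2j, …` gives
`n^(a+1) / (j(a+1)) + O(n^a)`, so asymptotics of the form `c nᵃ⁺¹ + O((n+1)ᵃ)` propagate
through both recursions by induction on `κ`. Writing `k = (n - m)/(κ+1)` turns the term
`k P_κ(m)` into a difference of two such sums. The two terms of the `S`-recursion contribute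
`H_κ / ((κ+1)!)²` and `(1/(κ+1)) / ((κ+1)!)²` to the leading coefficient, which is how the
harmonic number builds up.
-/

open Finset

namespace WeightedPartition

def solutions (κ n : ℕ) : Finset (Fin κ → ℕ) :=
  (Fintype.piFinset fun _ : Fin κ => range (n + 1)).filter
    fun t => ∑ i : Fin κ, ((i : ℕ) + 1) * t i = n

def solutionCount (κ n : ℕ) : ℕ := #(solutions κ n)

def totalParts (κ n : ℕ) : ℕ := ∑ t ∈ solutions κ n, ∑ i, t i

lemma mem_solutions {κ n : ℕ} {t : Fin κ → ℕ} :
    t ∈ solutions κ n ↔ ∑ i : Fin κ, ((i : ℕ) + 1) * t i = n := by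
  refine ⟨fun h => (mem_filter.1 h).2,
    fun h => mem_filter.2 ⟨Fintype.mem_piFinset.2 fun i => ?_, h⟩⟩
  rw [mem_range, Nat.lt_succ_iff, ← h]
  exact (Nat.le_mul_of_pos_left _ i.val.succ_pos).trans
    (single_le_sum (f := fun i : Fin κ => ((i : ℕ) + 1) * t i) (by simp) (mem_univ i))

lemma weightedSum_snoc {κ : ℕ} (s : Fin κ → ℕ) (k : ℕ) :
    ∑ i : Fin (κ + 1), ((i : ℕ) + 1) * (Fin.snoc s k : Fin (κ + 1) → ℕ) i
      = ∑ i : Fin κ, ((i : ℕ) + 1) * s i + (κ + 1) * k := by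
  simp [Fin.sum_univ_castSucc]

lemma sum_solutions_succ {M : Type*} [AddCommMonoid M] (κ n : ℕ)
    (w : (Fin (κ + 1) → ℕ) → M) :
    ∑ t ∈ solutions (κ + 1) n, w t = ∑ k ∈ range (n / (κ + 1) + 1),
      ∑ s ∈ solutions κ (n - (κ + 1) * k), w (Fin.snoc s k) := by
  rw [sum_sigma']
  refine sum_bij' (fun t _ => ⟨t (Fin.last κ), Fin.init t⟩) (fun q _ => Fin.snoc q.2 q.1)
    ?_ ?_ (fun t _ => Fin.snoc_init_self t) (fun q _ => by simp) (fun t _ => by simp)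
  · intro t ht
    rw [mem_solutions, ← Fin.snoc_init_self t, weightedSum_snoc] at ht
    simp only [mem_sigma, mem_range, Nat.lt_succ_iff, mem_solutions]
    exact ⟨(Nat.le_div_iff_mul_le (by omega)).2 (by rw [mul_comm]; omega), by omega⟩
  · rintro ⟨k, s⟩ hq
    simp only [mem_sigma, mem_range, Nat.lt_succ_iff, mem_solutions] at hq
    have hk := (Nat.le_div_iff_mul_le κ.succ_pos).1 hq.1
    rw [mem_solutions, weightedSum_snoc, hq.2, mul_comm]
    exact Nat.sub_add_cancel hk

lemma solutionCount_succ (κ n : ℕ) :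
    solutionCount (κ + 1) n
      = ∑ k ∈ range (n / (κ + 1) + 1), solutionCount κ (n - (κ + 1) * k) := by
  simpa only [solutionCount, card_eq_sum_ones] using sum_solutions_succ κ n fun _ => 1

lemma totalParts_succ (κ n : ℕ) :
    totalParts (κ + 1) n = ∑ k ∈ range (n / (κ + 1) + 1),
      (totalParts κ (n - (κ + 1) * k) + k * solutionCount κ (n - (κ + 1) * k)) := by
  rw [totalParts, sum_solutions_succ]
  refine sum_congr rfl fun k _ => ?_
  simp [Fin.sum_univ_castSucc, sum_add_distrib, totalParts, solutionCount, mul_comm]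

lemma solutions_one (n : ℕ) : solutions 1 n = {fun _ => n} := by
  ext t
  simp [mem_solutions, funext_iff, Fin.forall_fin_one]

lemma solutionCount_one (n : ℕ) : solutionCount 1 n = 1 := by
  simp [solutionCount, solutions_one]

lemma totalParts_one (n : ℕ) : totalParts 1 n = n := by
  simp [totalParts, solutions_one]

end WeightedPartition

section PowerDifferences

variable {R : Type*} [CommRing R] [LinearOrder R] [IsStrictOrderedRing R] {x y : R}

lemma mul_pow_mul_sub_le_pow_succ_sub_pow_succ (hy : 0 ≤ y) (hyx : y ≤ x) (a : ℕ) :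
    (a + 1) * y ^ a * (x - y) ≤ x ^ (a + 1) - y ^ (a + 1) := by
  induction a with
  | zero => simp
  | succ a ih =>
    have hstep : (a + 1) * y ^ a * (x - y) * y ≤ (x ^ (a + 1) - y ^ (a + 1)) * x :=
      mul_le_mul ih hyx hy (ih.trans' (by positivity))
    calc ((a + 1 : ℕ) + 1 : R) * y ^ (a + 1) * (x - y)
        = (a + 1) * y ^ a * (x - y) * y + y ^ (a + 1) * (x - y) := by push_cast; ring
      _ ≤ (x ^ (a + 1) - y ^ (a + 1)) * x + y ^ (a + 1) * (x - y) := by gcongr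
      _ = x ^ (a + 1 + 1) - y ^ (a + 1 + 1) := by ring

lemma pow_succ_sub_pow_succ_le_mul_pow_mul (hy : 0 ≤ y) (hyx : y ≤ x) (a : ℕ) :
    x ^ (a + 1) - y ^ (a + 1) ≤ (a + 1) * x ^ a * (x - y) := by
  have h := (le_abs_self _).trans (abs_pow_sub_pow_le x y (a + 1))
  rw [abs_of_nonneg (sub_nonneg.2 hyx), abs_of_nonneg (hy.trans hyx), abs_of_nonneg hy,
    max_eq_left hyx, Nat.add_sub_cancel, Nat.cast_succ] at h
  exact h.trans_eq (by ring)

end PowerDifferences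

section RiemannSums

variable {j : ℕ} (a n : ℕ)

lemma pow_succ_le_mul_sum_range_pow_sub_mul (hj : 0 < j) :
    (n : ℝ) ^ (a + 1)
      ≤ (a + 1) * j * ∑ k ∈ range (n / j + 1), ((n - j * k : ℕ) : ℝ) ^ a := by
  set f : ℕ → ℝ := fun k => ((n - j * k : ℕ) : ℝ)
  have hdrop : ∀ k, f k - f (k + 1) ≤ j := fun k => by
    simp only [f, sub_le_iff_le_add, mul_add, mul_one]
    exact_mod_cast (by omega : n - j * k ≤ j + (n - (j * k + j)))
  have hanti : ∀ k, f (k + 1) ≤ f k := fun k => by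
    simp only [f]; gcongr; omega
  have hlast : f (n / j + 1) = 0 := by
    simp [f, Nat.sub_eq_zero_of_le (Nat.lt_mul_div_succ n hj).le]
  calc (n : ℝ) ^ (a + 1)
        = ∑ k ∈ range (n / j + 1), (f k ^ (a + 1) - f (k + 1) ^ (a + 1)) := by
          rw [sum_range_sub', hlast]; simp [f]
    _ ≤ ∑ k ∈ range (n / j + 1), (a + 1) * j * f k ^ a := by
        refine sum_le_sum fun k _ => ?_
        calc f k ^ (a + 1) - f (k + 1) ^ (a + 1) ≤ (a + 1) * f k ^ a * (f k - f (k + 1)) :=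
              pow_succ_sub_pow_succ_le_mul_pow_mul (Nat.cast_nonneg _) (hanti k) a
          _ ≤ (a + 1) * f k ^ a * j := by gcongr; exact hdrop k
          _ = (a + 1) * j * f k ^ a := by ring
    _ = _ := by rw [mul_sum]

lemma mul_sum_range_pow_sub_mul_le :
    (a + 1) * j * ∑ k ∈ range (n / j + 1), ((n - j * k : ℕ) : ℝ) ^ a
      ≤ (n : ℝ) ^ (a + 1) + (a + 1) * j * (n : ℝ) ^ a := by
  set f : ℕ → ℝ := fun k => ((n - j * k : ℕ) : ℝ)
  have hdrop : ∀ k < n / j, f k - f (k + 1) = j := fun k hk => by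
    have : j * (k + 1) ≤ n := (Nat.mul_le_mul_left j hk).trans (Nat.mul_div_le n j)
    simp only [f, sub_eq_iff_eq_add, mul_add, mul_one] at this ⊢
    exact_mod_cast (by omega : n - j * k = j + (n - (j * k + j)))
  have hanti : ∀ k, f (k + 1) ≤ f k := fun k => by
    simp only [f]; gcongr; omega
  have htail : (a + 1) * j * ∑ k ∈ range (n / j), f (k + 1) ^ a ≤ (n : ℝ) ^ (a + 1) :=
    calc (a + 1) * j * ∑ k ∈ range (n / j), f (k + 1) ^ a
        = ∑ k ∈ range (n / j), (a + 1) * f (k + 1) ^ a * (f k - f (k + 1)) := by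
          rw [mul_sum]
          refine sum_congr rfl fun k hk => ?_
          rw [hdrop k (mem_range.1 hk)]; ring
      _ ≤ ∑ k ∈ range (n / j), (f k ^ (a + 1) - f (k + 1) ^ (a + 1)) :=
          sum_le_sum fun k _ =>
            mul_pow_mul_sub_le_pow_succ_sub_pow_succ (Nat.cast_nonneg _) (hanti k) a
      _ = (n : ℝ) ^ (a + 1) - f (n / j) ^ (a + 1) := by rw [sum_range_sub']; simp [f]
      _ ≤ (n : ℝ) ^ (a + 1) := sub_le_self _ (by positivity)
  rw [sum_range_succ']
  simp only [f, mul_zero, Nat.sub_zero] at htail ⊢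
  linarith

lemma abs_sum_range_pow_sub_mul_sub_le (hj : 0 < j) :
    |∑ k ∈ range (n / j + 1), ((n - j * k : ℕ) : ℝ) ^ a
        - (n : ℝ) ^ (a + 1) / (j * (a + 1))| ≤ (n : ℝ) ^ a := by
  set S := ∑ k ∈ range (n / j + 1), ((n - j * k : ℕ) : ℝ) ^ a
  have hpos : (0 : ℝ) < j * (a + 1) := by positivity
  have hlow := pow_succ_le_mul_sum_range_pow_sub_mul a n hj
  have hupp := mul_sum_range_pow_sub_mul_le (j := j) a n
  have h1 : (n : ℝ) ^ (a + 1) / (j * (a + 1)) ≤ S := (div_le_iff₀ hpos).2 (by linarith)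
  have h2 : S - (n : ℝ) ^ a ≤ (n : ℝ) ^ (a + 1) / (j * (a + 1)) :=
    (le_div_iff₀ hpos).2 (by linarith)
  rw [abs_le]
  constructor <;> linarith [pow_nonneg (Nat.cast_nonneg (α := ℝ) n) a]

end RiemannSums

open Asymptotics

/-- `f n = c * n ^ (a + 1) + O((n + 1) ^ a)` with a constant uniform in `n`. -/
def IsPowApprox (f : ℕ → ℝ) (c : ℝ) (a : ℕ) : Prop :=
  (fun n : ℕ => f n - c * (n : ℝ) ^ (a + 1)) =O[⊤] fun n : ℕ => ((n : ℝ) + 1) ^ a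

namespace IsPowApprox

variable {f g : ℕ → ℝ} {c d : ℝ} {a : ℕ}

lemma of_bound (C : ℝ)
    (h : ∀ n : ℕ, |f n - c * (n : ℝ) ^ (a + 1)| ≤ C * ((n : ℝ) + 1) ^ a) :
    IsPowApprox f c a :=
  isBigO_top.2 ⟨C, fun n => by simpa [abs_of_pos (by positivity : (0 : ℝ) < n + 1)] using h n⟩

lemma exists_pos_bound (hf : IsPowApprox f c a) :
    ∃ C > 0, ∀ n : ℕ, |f n - c * (n : ℝ) ^ (a + 1)| ≤ C * ((n : ℝ) + 1) ^ a := by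
  obtain ⟨C, hC, h⟩ := hf.exists_pos
  refine ⟨C, hC, fun n => ?_⟩
  simpa [abs_of_pos (by positivity : (0 : ℝ) < n + 1)] using isBigOWith_top.1 h n

lemma congr_const (hf : IsPowApprox f c a) (h : c = d) : IsPowApprox f d a := h ▸ hf

lemma add (hf : IsPowApprox f c a) (hg : IsPowApprox g d a) :
    IsPowApprox (fun n => f n + g n) (c + d) a :=
  (IsBigO.add hf hg).congr_left fun n => by ring

lemma sub (hf : IsPowApprox f c a) (hg : IsPowApprox g d a) :
    IsPowApprox (fun n => f n - g n) (c - d) a :=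
  (IsBigO.sub hf hg).congr_left fun n => by ring

lemma div_const (hf : IsPowApprox f c a) (b : ℝ) : IsPowApprox (fun n => f n / b) (c / b) a :=
  (hf.const_mul_left b⁻¹).congr_left fun n => by ring

lemma natCast_mul (hf : IsPowApprox f c a) : IsPowApprox (fun n => n * f n) c (a + 1) := by
  obtain ⟨C, hC, h⟩ := hf.exists_pos_bound
  refine of_bound C fun n => ?_
  calc |n * f n - c * (n : ℝ) ^ (a + 1 + 1)| = |n * (f n - c * (n : ℝ) ^ (a + 1))| := by
        ring_nf
    _ = n * |f n - c * (n : ℝ) ^ (a + 1)| := by rw [abs_mul, Nat.abs_cast]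
    _ ≤ (n + 1) * (C * ((n : ℝ) + 1) ^ a) :=
        mul_le_mul (by linarith) (h n) (abs_nonneg _) (by positivity)
    _ = C * ((n : ℝ) + 1) ^ (a + 1) := by ring

/-- Summing along the progression `n, n - j, n - 2j, …` integrates the leading term and
multiplies the error by the number `n / j + 1 ≤ n + 1` of summands. -/
lemma sum_range_div {j : ℕ} (hj : 0 < j) (hf : IsPowApprox f c a) :
    IsPowApprox (fun n => ∑ k ∈ range (n / j + 1), f (n - j * k))
      (c / (j * (a + 2))) (a + 1) := by
  obtain ⟨C, hC, h⟩ := hf.exists_pos_bound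
  refine of_bound (C + |c|) fun n => ?_
  set K := range (n / j + 1)
  have hcard : (#K : ℝ) ≤ n + 1 := by
    simp only [K, card_range]; exact_mod_cast Nat.succ_le_succ (Nat.div_le_self n j)
  have herr : ∀ k ∈ K, |f (n - j * k) - c * ((n - j * k : ℕ) : ℝ) ^ (a + 1)|
      ≤ C * ((n : ℝ) + 1) ^ a := fun k _ =>
    (h _).trans (by gcongr; exact_mod_cast Nat.sub_le n (j * k))
  have hmain := abs_sum_range_pow_sub_mul_sub_le (a + 1) n hj
  calc |∑ k ∈ K, f (n - j * k) - c / (j * (a + 2)) * (n : ℝ) ^ (a + 1 + 1)|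
      = |∑ k ∈ K, (f (n - j * k) - c * ((n - j * k : ℕ) : ℝ) ^ (a + 1))
          + c * (∑ k ∈ K, ((n - j * k : ℕ) : ℝ) ^ (a + 1)
            - (n : ℝ) ^ (a + 1 + 1) / (j * ((a + 1 : ℕ) + 1)))| := by
        rw [sum_sub_distrib, ← mul_sum]; push_cast; ring_nf
    _ ≤ #K * (C * ((n : ℝ) + 1) ^ a) + |c| * (n : ℝ) ^ (a + 1) := by
        refine (abs_add_le _ _).trans (add_le_add ?_ ?_)
        · exact (abs_sum_le_sum_abs _ _).trans
            ((sum_le_card_nsmul _ _ _ herr).trans_eq (nsmul_eq_mul _ _))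
        · rw [abs_mul]; gcongr
    _ ≤ (n + 1) * (C * ((n : ℝ) + 1) ^ a) + |c| * ((n : ℝ) + 1) ^ (a + 1) := by
        gcongr; linarith
    _ = (C + |c|) * ((n : ℝ) + 1) ^ (a + 1) := by ring

end IsPowApprox

open scoped Nat

namespace WeightedPartition

lemma totalParts_succ_eq (κ n : ℕ) :
    (totalParts (κ + 1) n : ℝ)
      = ∑ k ∈ range (n / (κ + 1) + 1), (totalParts κ (n - (κ + 1) * k) : ℝ)
        + (n * solutionCount (κ + 1) n - ∑ k ∈ range (n / (κ + 1) + 1),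
            ((n - (κ + 1) * k : ℕ) : ℝ) * solutionCount κ (n - (κ + 1) * k)) / (κ + 1) := by
  rw [totalParts_succ, solutionCount_succ]
  push_cast
  rw [sum_add_distrib, mul_sum, ← sum_sub_distrib, sum_div]
  congr 1
  refine sum_congr rfl fun k hk => ?_
  have hk : k * (κ + 1) ≤ n :=
    (Nat.le_div_iff_mul_le κ.succ_pos).1 (Nat.lt_succ_iff.1 (mem_range.1 hk))
  push_cast [mul_comm (κ + 1) k ▸ hk]
  field_simp
  ring

lemma isPowApprox_solutionCount (k : ℕ) :
    IsPowApprox (fun n => (solutionCount (k + 2) n : ℝ)) (1 / ((k + 1)! * (k + 2)!)) k := by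
  induction k with
  | zero =>
    refine IsPowApprox.of_bound 1 fun n => ?_
    have h := abs_sum_range_pow_sub_mul_sub_le 0 n two_pos
    simp only [pow_zero, sum_const, card_range, nsmul_eq_mul, mul_one] at h
    rw [solutionCount_succ]
    simpa [solutionCount_one, div_eq_inv_mul] using h
  | succ k ih =>
    have hrec : (fun n => (solutionCount (k + 3) n : ℝ))
        = fun n => ∑ i ∈ range (n / (k + 3) + 1),
            (solutionCount (k + 2) (n - (k + 3) * i) : ℝ) := by
      funext n; rw [solutionCount_succ]; push_cast; rfl
    rw [hrec]
    refine (ih.sum_range_div (j := k + 3) (by omega)).congr_const ?_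
    push_cast [Nat.factorial_succ]
    field_simp
    ring

lemma isPowApprox_natCast_mul_solutionCount (k : ℕ) :
    IsPowApprox (fun n => n * (solutionCount (k + 1) n : ℝ)) (1 / (k ! * (k + 1)!)) k := by
  cases k with
  | zero => exact IsPowApprox.of_bound 0 fun n => by simp [solutionCount_one]
  | succ k => exact (isPowApprox_solutionCount k).natCast_mul

lemma isPowApprox_totalParts (k : ℕ) :
    IsPowApprox (fun n => (totalParts (k + 1) n : ℝ))
      ((∑ j ∈ Icc 1 (k + 1), (1 : ℝ) / j) / ((k + 1)! * (k + 1)!)) k := by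
  induction k with
  | zero => exact IsPowApprox.of_bound 0 fun n => by simp [totalParts_one]
  | succ k ih =>
    have hrec := funext fun n => totalParts_succ_eq (k + 1) n
    push_cast at hrec
    rw [hrec]
    have hk : 0 < k + 2 := by omega
    refine ((ih.sum_range_div hk).add
      (((isPowApprox_natCast_mul_solutionCount (k + 1)).sub
        ((isPowApprox_natCast_mul_solutionCount k).sum_range_div hk)).div_const _)).congr_const ?_
    rw [sum_Icc_succ_top (show 1 ≤ k + 1 + 1 by omega)]
    push_cast [Nat.factorial_succ]
    field_simp
    ring

end WeightedPartition

/-- asymptotics of the weighted partition sum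
`S(m) = Σ_{m₁+2m₂+⋯+κm_κ = m} (m₁ + ⋯ + m_κ)`:
`|S(m) − H_κ·m^κ/(κ!·κ!)| ≤ C·m^{κ−1}` for all `m ≥ 1`, for some constant `C > 0`.
Tuples `(m₁, …, m_κ)` are encoded as `t : Fin κ → ℕ` with `t i` standing for `m_{i+1}`;
since the weight of each `m_i` is at least `1`, every solution of
`m₁ + 2m₂ + ⋯ + κm_κ = m` has all entries `≤ m`, so ranging over
`Fin κ → Finset.range (m+1)` captures all of them. -/
theorem weighted_partition_sum_asymptotics (κ : ℕ) (hκ : 1 ≤ κ) :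
    ∃ C : ℝ, 0 < C ∧ ∀ m : ℕ, 1 ≤ m →
      |((∑ t ∈ (Fintype.piFinset fun _ : Fin κ => Finset.range (m + 1)).filter
            (fun t => ∑ i : Fin κ, ((i : ℕ) + 1) * t i = m),
            ∑ i : Fin κ, t i : ℕ) : ℝ)
          - (∑ j ∈ Finset.Icc 1 κ, (1 : ℝ) / j) * (m : ℝ) ^ κ
              / ((κ.factorial : ℝ) * (κ.factorial : ℝ))|
        ≤ C * (m : ℝ) ^ (κ - 1) := by
  obtain ⟨k, rfl⟩ : ∃ k, κ = k + 1 := ⟨κ - 1, by omega⟩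
  obtain ⟨C, hC, hbound⟩ := (WeightedPartition.isPowApprox_totalParts k).exists_pos_bound
  refine ⟨C * 2 ^ k, by positivity, fun m hm => ?_⟩
  have hm' : (1 : ℝ) ≤ m := by exact_mod_cast hm
  calc _ = |(WeightedPartition.totalParts (k + 1) m : ℝ)
          - (∑ j ∈ Icc 1 (k + 1), (1 : ℝ) / j) / ((k + 1)! * (k + 1)!)
            * (m : ℝ) ^ (k + 1)| := by
        rw [div_mul_eq_mul_div]; rfl
    _ ≤ C * ((m : ℝ) + 1) ^ k := hbound m
    _ ≤ C * (2 * m) ^ k := by gcongr; linarith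
    _ = C * 2 ^ k * (m : ℝ) ^ (k + 1 - 1) := by rw [mul_pow, Nat.add_sub_cancel]; ring
end
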